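/- Let x, y, z be elements of the graph group G_F. If y⁻¹x ∧ y⁻¹z = 1, then the joins involved are finite and (x ∧ z) ∨ (x ∧ y) ∨ (y ∧ z) = y. -/

import Mathlib

open Pointwise

namespace GraphGroupPaper

/-- The set of commutator relators: `gᵢ` and `gⱼ` commute for every pair of distinct
`i, j` with `{i,j} ∉ F`. -/
def Rels (k : ℕ) (F : Set (Sym2 (Fin k))) : Set (FreeGroup (Fin k)) :=
  {w | ∃ i j : Fin k, i ≠ j ∧ s(i, j) ∉ F ∧
      w = FreeGroup.of i * FreeGroup.of j * (FreeGroup.of i)⁻¹ * (FreeGroup.of j)⁻¹}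

/-- The graph group `G_F` with generators `g₁, …, g_k` and relations `gᵢgⱼ = gⱼgᵢ`
for all distinct `i, j` with `{i,j} ∉ F`. -/
abbrev Grp (k : ℕ) (F : Set (Sym2 (Fin k))) := PresentedGroup (Rels k F)

/-- The generator `gᵢ` of the graph group. -/
def gen (k : ℕ) (F : Set (Sym2 (Fin k))) (i : Fin k) : Grp k F :=
  PresentedGroup.of i

/-- The group element corresponding to a symbol: `(i, true)` stands for `gᵢ`,
`(i, false)` stands for `gᵢ⁻¹`. -/
def sym (k : ℕ) (F : Set (Sym2 (Fin k))) (α : Fin k × Bool) : Grp k F :=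
  if α.2 then gen k F α.1 else (gen k F α.1)⁻¹

/-- The product of the word `l` of symbols, as an element of the graph group. -/
def wordProd (k : ℕ) (F : Set (Sym2 (Fin k))) (l : List (Fin k × Bool)) : Grp k F :=
  (l.map (sym k F)).prod

/-- `|x|` : the length of a shortest word in the symbols representing `x`. -/
noncomputable def len {k : ℕ} {F : Set (Sym2 (Fin k))} (x : Grp k F) : ℕ :=
  sInf {n | ∃ l : List (Fin k × Bool), wordProd k F l = x ∧ l.length = n}

/-- The partial order on `G_F`:  `x ≤ y` iff `|y| = |x| + |x⁻¹y|`. -/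
def le {k : ℕ} {F : Set (Sym2 (Fin k))} (x y : Grp k F) : Prop :=
  len y = len x + len (x⁻¹ * y)

/-- `m` is the meet `x ∧ y` (greatest lower bound w.r.t. `le`). -/
def IsMeet {k : ℕ} {F : Set (Sym2 (Fin k))} (x y m : Grp k F) : Prop :=
  le m x ∧ le m y ∧ ∀ w, le w x → le w y → le w m

/-- `j` is the (finite) join `x ∨ y` (least upper bound w.r.t. `le`);
`x ∨ y` is finite iff such a `j` exists. -/
def IsJoin {k : ℕ} {F : Set (Sym2 (Fin k))} (x y j : Grp k F) : Prop :=
  le x j ∧ le y j ∧ ∀ w, le x w → le y w → le j w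

/-- `j` is the (finite) join of the set `S`. -/
def IsJoinSet {k : ℕ} {F : Set (Sym2 (Fin k))} (S : Set (Grp k F)) (j : Grp k F) : Prop :=
  (∀ s ∈ S, le s j) ∧ ∀ w, (∀ s ∈ S, le s w) → le j w

/-- `y` is a segment of `a` if `a = x·y·z` for some `x, z`. -/
def Segment {k : ℕ} {F : Set (Sym2 (Fin k))} (y a : Grp k F) : Prop :=
  ∃ x z, a = x * y * z ∧ len a = len x + len y + len z

/-- The left-invariant metric `dist(x,y) = |x⁻¹y|`. -/
noncomputable def dist {k : ℕ} {F : Set (Sym2 (Fin k))} (x y : Grp k F) : ℕ :=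
  len (x⁻¹ * y)

/-- A nonempty set `L` is convex if `x, z ∈ L` and `dist(x,y) + dist(y,z) = dist(x,z)`
imply `y ∈ L`. -/
def ConvexSet {k : ℕ} {F : Set (Sym2 (Fin k))} (L : Set (Grp k F)) : Prop :=
  L.Nonempty ∧ ∀ x z y : Grp k F, x ∈ L → z ∈ L →
    dist x y + dist y z = dist x z → y ∈ L

/-- An ideal: nonempty, downward closed, and closed under finite joins. -/
def IdealSet {k : ℕ} {F : Set (Sym2 (Fin k))} (I : Set (Grp k F)) : Prop :=
  I.Nonempty ∧ (∀ x ∈ I, ∀ y, le y x → y ∈ I) ∧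
    (∀ x ∈ I, ∀ y ∈ I, ∀ j, IsJoin x y j → j ∈ I)

/-- `H` is closed if both `H` and `H⁻¹` are ideals. -/
def ClosedSet {k : ℕ} {F : Set (Sym2 (Fin k))} (H : Set (Grp k F)) : Prop :=
  IdealSet H ∧ IdealSet H⁻¹

/-- `m` is a minimal element of `S` w.r.t. `le`. -/
def MinimalIn {k : ℕ} {F : Set (Sym2 (Fin k))} (S : Set (Grp k F)) (m : Grp k F) : Prop :=
  m ∈ S ∧ ∀ x ∈ S, le x m → x = m

/-- `l` is a reduced (i.e. shortest) word representing `x`. -/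
def MinWord {k : ℕ} {F : Set (Sym2 (Fin k))} (x : Grp k F) (l : List (Fin k × Bool)) : Prop :=
  wordProd k F l = x ∧ l.length = len x

open Classical in
/-- `#_α(x)`: the number of occurrences of the symbol `α` (not counting `α⁻¹`)
in a reduced word representing `x`. -/
noncomputable def symCount {k : ℕ} {F : Set (Sym2 (Fin k))} (α : Fin k × Bool)
    (x : Grp k F) : ℕ :=
  if h : ∃ l, MinWord x l then h.choose.count α else 0

/-- The symbol `α` occurs in `x`. -/
def Occurs {k : ℕ} {F : Set (Sym2 (Fin k))} (α : Fin k × Bool) (x : Grp k F) : Prop :=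
  0 < symCount α x

/-- `α` is a maximal symbol of `x`, i.e. `xα⁻¹ ≤ x`. -/
def MaxSym {k : ℕ} {F : Set (Sym2 (Fin k))} (α : Fin k × Bool) (x : Grp k F) : Prop :=
  le (x * (sym k F α)⁻¹) x

/-- A peak: an element with precisely one maximal symbol. -/
def IsPeak {k : ℕ} {F : Set (Sym2 (Fin k))} (p : Grp k F) : Prop :=
  ∃! α : Fin k × Bool, MaxSym α p

/-- An `α`-peak: a peak whose unique maximal symbol is `α`. -/
def AlphaPeak {k : ℕ} {F : Set (Sym2 (Fin k))} (α : Fin k × Bool) (p : Grp k F) : Prop :=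
  MaxSym α p ∧ ∀ β, MaxSym β p → β = α

/-- The set of generator indices occurring in `b`. -/
def Support {k : ℕ} {F : Set (Sym2 (Fin k))} (b : Grp k F) : Set (Fin k) :=
  {i | Occurs (i, true) b ∨ Occurs (i, false) b}

/-- `b` is connected: the generators occurring in `b` induce a connected subgraph of
the graph `([k], F)`. -/
def Conn {k : ℕ} {F : Set (Sym2 (Fin k))} (b : Grp k F) : Prop :=
  (SimpleGraph.induce (Support b) (SimpleGraph.fromEdgeSet F)).Connected

/-- `b` is cyclically reduced: `b ∧ b⁻¹ = 1`. -/
def CycRed {k : ℕ} {F : Set (Sym2 (Fin k))} (b : Grp k F) : Prop :=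
  IsMeet b b⁻¹ 1

/-!
Call a word reduced if no letter `γ` is followed, after letters commuting with `γ`, by `γ⁻¹`.
Letting `G = Grp k F` act on reduced words up to swaps of commuting letters shows that two
reduced words represent the same element iff they differ by swaps; hence reduced words are
exactly the geodesic ones. So `a ≤ g` means that some geodesic word for `g` begins with one
for `a`, and `|ab| < |a| + |b|` exactly when `a⁻¹` and `b` have a common first letter.

The hypothesis `y⁻¹x ∧ y⁻¹z = 1` puts `y` on a geodesic from `x` to `z`. Comparing, by Levi's
lemma, a geodesic through `m = x ∧ z` with one through `y` writes `m⁻¹y = q⁻¹r` where `q⁻¹` is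
a prefix of `m⁻¹x`, `r` a prefix of `m⁻¹z`, and `q`, `r` commute letterwise; a letter cancelling
between `m` and `m⁻¹y` would then cancel between `m` and `m⁻¹x` or `m⁻¹z`. Thus `x ∧ z ≤ y`,
so `x ∧ z ≤ x ∧ y`. Finally, if `a, b ≤ y` and `y⁻¹a ∧ y⁻¹b = 1` then `y = a ∨ b`, by
induction on `|y|`: a first letter of `a` is either a first letter of `b` or commutes with `b`,
and can be stripped from `a`, `y` and any upper bound.
-/

abbrev Letter (k : ℕ) := Fin k × Bool

def Letter.inv {k : ℕ} (α : Letter k) : Letter k := (α.1, !α.2)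

def Indep {k : ℕ} (F : Set (Sym2 (Fin k))) (α β : Letter k) : Prop :=
  α.1 ≠ β.1 ∧ s(α.1, β.1) ∉ F

section

variable {k : ℕ} {F : Set (Sym2 (Fin k))}

@[simp] lemma Letter.inv_inv (α : Letter k) : α.inv.inv = α := by
  simp [Letter.inv]

lemma Indep.symm {α β : Letter k} (h : Indep F α β) : Indep F β α :=
  ⟨h.1.symm, by rw [Sym2.eq_swap]; exact h.2⟩

@[simp] lemma indep_inv_left {α β : Letter k} : Indep F α.inv β ↔ Indep F α β := Iff.rfl

@[simp] lemma indep_inv_right {α β : Letter k} : Indep F α β.inv ↔ Indep F α β := Iff.rfl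

lemma Indep.irrefl (α : Letter k) : ¬ Indep F α α := fun h => h.1 rfl

lemma Indep.ne_inv {α β : Letter k} (h : Indep F α β) : β ≠ α.inv := by
  rintro rfl; exact h.1 rfl

lemma gen_commute {i j : Fin k} (hij : i ≠ j) (hF : s(i, j) ∉ F) :
    Commute (gen k F i) (gen k F j) := by
  have hr : FreeGroup.of i * FreeGroup.of j * (FreeGroup.of i)⁻¹ * (FreeGroup.of j)⁻¹ ∈
      Rels k F := ⟨i, j, hij, hF, rfl⟩
  have h1 : gen k F i * gen k F j * (gen k F i)⁻¹ * (gen k F j)⁻¹ = 1 := by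
    simp only [gen, PresentedGroup.of, ← map_mul, ← map_inv]
    exact (QuotientGroup.eq_one_iff _).mpr (Subgroup.subset_normalClosure hr)
  exact mul_inv_eq_iff_eq_mul.mp (mul_inv_eq_one.mp h1)

lemma Indep.commute {α β : Letter k} (h : Indep F α β) :
    Commute (sym k F α) (sym k F β) := by
  have hg := gen_commute (F := F) h.1 h.2
  unfold sym
  split_ifs <;> simp [hg, hg.inv_left, hg.inv_right, hg.inv_inv]

@[simp] lemma sym_inv (α : Letter k) : sym k F α.inv = (sym k F α)⁻¹ := by
  cases α with | mk i b => cases b <;> simp [sym, Letter.inv]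

@[simp] lemma wordProd_nil : wordProd k F [] = 1 := rfl

@[simp] lemma wordProd_cons (α : Letter k) (l : List (Letter k)) :
    wordProd k F (α :: l) = sym k F α * wordProd k F l := by
  simp [wordProd]

@[simp] lemma wordProd_append (l₁ l₂ : List (Letter k)) :
    wordProd k F (l₁ ++ l₂) = wordProd k F l₁ * wordProd k F l₂ := by
  simp [wordProd]

lemma commute_wordProd {α : Letter k} {l : List (Letter k)} (h : ∀ β ∈ l, Indep F α β) :
    Commute (sym k F α) (wordProd k F l) := by
  induction l with
  | nil => simp
  | cons β t ih =>
    rw [wordProd_cons]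
    exact (h β (by simp)).commute.mul_right (ih fun γ hγ => h γ (by simp [hγ]))

def wordInv (l : List (Letter k)) : List (Letter k) := (l.map Letter.inv).reverse

@[simp] lemma length_wordInv (l : List (Letter k)) : (wordInv l).length = l.length := by
  simp [wordInv]

@[simp] lemma wordInv_append (l₁ l₂ : List (Letter k)) :
    wordInv (l₁ ++ l₂) = wordInv l₂ ++ wordInv l₁ := by
  simp [wordInv]

@[simp] lemma wordInv_cons (α : Letter k) (l : List (Letter k)) :
    wordInv (α :: l) = wordInv l ++ [α.inv] := by
  simp [wordInv]

@[simp] lemma mem_wordInv {α : Letter k} {l : List (Letter k)} :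
    α ∈ wordInv l ↔ α.inv ∈ l := by
  simp only [wordInv, List.mem_reverse, List.mem_map]
  exact ⟨by rintro ⟨β, hβ, rfl⟩; simpa using hβ, fun h => ⟨α.inv, h, by simp⟩⟩

@[simp] lemma wordProd_wordInv (l : List (Letter k)) :
    wordProd k F (wordInv l) = (wordProd k F l)⁻¹ := by
  induction l with
  | nil => simp [wordInv]
  | cons α t ih => simp [ih]

theorem _root_.List.append_eq_append_cons {α : Type*} {u v x y : List α} {a : α}
    (h : u ++ v = x ++ a :: y) :
    (∃ y₁, u = x ++ a :: y₁ ∧ y = y₁ ++ v) ∨ (∃ x₁, v = x₁ ++ a :: y ∧ x = u ++ x₁) := by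
  rcases List.append_eq_append_iff.mp h with ⟨t, rfl, rfl⟩ | ⟨t, rfl, ht⟩
  · exact Or.inr ⟨t, rfl, rfl⟩
  · rcases t with _ | ⟨b, t⟩
    · exact Or.inr ⟨[], by simpa using ht.symm, by simp⟩
    · obtain ⟨rfl, rfl⟩ := List.cons_eq_cons.mp ht
      exact Or.inl ⟨t, rfl, rfl⟩

variable (F) in
def SwapStep (l l' : List (Letter k)) : Prop :=
  ∃ u v α β, Indep F α β ∧ l = u ++ α :: β :: v ∧ l' = u ++ β :: α :: v

variable (F) in
/-- Equality in the free partially commutative monoid. -/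
def SwapEqv : List (Letter k) → List (Letter k) → Prop :=
  Relation.ReflTransGen (SwapStep F)

namespace SwapEqv

@[refl] lemma refl (l : List (Letter k)) : SwapEqv F l l := Relation.ReflTransGen.refl

lemma trans {a b c : List (Letter k)} (h₁ : SwapEqv F a b) (h₂ : SwapEqv F b c) :
    SwapEqv F a c :=
  Relation.ReflTransGen.trans h₁ h₂

lemma swap (u v : List (Letter k)) {α β : Letter k} (h : Indep F α β) :
    SwapEqv F (u ++ α :: β :: v) (u ++ β :: α :: v) :=
  Relation.ReflTransGen.single ⟨u, v, α, β, h, rfl, rfl⟩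

lemma symm {a b : List (Letter k)} (h : SwapEqv F a b) : SwapEqv F b a := by
  induction h with
  | refl => rfl
  | tail _ hs ih =>
    obtain ⟨u, v, α, β, hi, rfl, rfl⟩ := hs
    exact (swap u v hi.symm).trans ih

lemma perm {l l' : List (Letter k)} (h : SwapEqv F l l') : l.Perm l' := by
  induction h with
  | refl => rfl
  | tail _ hs ih =>
    obtain ⟨u, v, α, β, -, rfl, rfl⟩ := hs
    exact ih.trans ((List.Perm.swap β α v).append_left u)

lemma wordProd_eq {l l' : List (Letter k)} (h : SwapEqv F l l') :
    wordProd k F l = wordProd k F l' := by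
  induction h with
  | refl => rfl
  | tail _ hs ih =>
    obtain ⟨u, v, α, β, hi, rfl, rfl⟩ := hs
    simp only [ih, wordProd_append, wordProd_cons, ← mul_assoc, hi.commute.eq]

lemma append_left (u : List (Letter k)) {l l' : List (Letter k)} (h : SwapEqv F l l') :
    SwapEqv F (u ++ l) (u ++ l') :=
  Relation.ReflTransGen.lift (u ++ ·)
    (fun _ _ ⟨w, v, α, β, hi, h₁, h₂⟩ => ⟨u ++ w, v, α, β, hi, by simp [h₁], by simp [h₂]⟩) _ _ h

lemma cons (γ : Letter k) {l l' : List (Letter k)} (h : SwapEqv F l l') :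
    SwapEqv F (γ :: l) (γ :: l') :=
  h.append_left [γ]

end SwapEqv

lemma swapEqv_move_front {δ : Letter k} {u : List (Letter k)} (h : ∀ β ∈ u, Indep F δ β)
    (v : List (Letter k)) : SwapEqv F (u ++ δ :: v) (δ :: (u ++ v)) := by
  induction u with
  | nil => rfl
  | cons γ t ih =>
    have hγ : Indep F γ δ := (h γ (by simp)).symm
    exact ((ih fun β hβ => h β (by simp [hβ])).cons γ).trans (SwapEqv.swap [] (t ++ v) hγ)

lemma exists_of_swapEqv_cons {δ : Letter k} {T L : List (Letter k)}
    (h : SwapEqv F (δ :: T) L) :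
    ∃ L₀ L₁, L = L₀ ++ δ :: L₁ ∧ (∀ β ∈ L₀, Indep F δ β) ∧ SwapEqv F (L₀ ++ L₁) T := by
  induction h with
  | refl => exact ⟨[], T, rfl, by simp, .refl _⟩
  | tail _ hs ih =>
    obtain ⟨M₀, M₁, rfl, hind, hrem⟩ := ih
    obtain ⟨u, v, α, β, hαβ, hM, rfl⟩ := hs
    rcases List.append_eq_append_cons hM.symm with ⟨y, rfl, rfl⟩ | ⟨x, hx, rfl⟩
    · refine ⟨M₀, y ++ β :: α :: v, by simp, hind, ?_⟩
      simpa using (SwapEqv.swap (M₀ ++ y) v hαβ.symm).trans (by simpa using hrem)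
    · rcases x with _ | ⟨a₁, _ | ⟨a₂, x⟩⟩
      · obtain ⟨rfl, rfl⟩ : α = δ ∧ β :: v = M₁ := by simpa using hx
        refine ⟨u ++ [β], v, by simp, fun γ hγ => ?_, by simpa using hrem⟩
        rcases List.mem_append.mp hγ with hγ | hγ
        · exact hind γ (by simpa using hγ)
        · rwa [List.mem_singleton.mp hγ]
      · obtain ⟨rfl, rfl, rfl⟩ : α = a₁ ∧ β = δ ∧ v = M₁ := by simpa using hx
        exact ⟨u, α :: v, rfl, fun γ hγ => hind γ (by simp [hγ]), by simpa using hrem⟩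
      · obtain ⟨rfl, rfl, rfl⟩ : α = a₁ ∧ β = a₂ ∧ v = x ++ δ :: M₁ := by simpa using hx
        refine ⟨u ++ β :: α :: x, M₁, by simp, fun γ hγ => hind γ ?_, ?_⟩
        · simp only [List.mem_append, List.mem_cons] at hγ ⊢; tauto
        · simpa using (SwapEqv.swap u (x ++ M₁) hαβ.symm).trans (by simpa using hrem)

/-- Levi's lemma for the free partially commutative monoid. -/
lemma SwapEqv.levi {L₁ L₂ M₁ M₂ : List (Letter k)} (h : SwapEqv F (L₁ ++ L₂) (M₁ ++ M₂)) :
    ∃ p q r s, SwapEqv F L₁ (p ++ q) ∧ SwapEqv F L₂ (r ++ s) ∧ SwapEqv F M₁ (p ++ r) ∧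
      SwapEqv F M₂ (q ++ s) ∧ ∀ γ ∈ q, ∀ β ∈ r, Indep F γ β := by
  induction M₁ generalizing L₁ L₂ with
  | nil => exact ⟨[], L₁, [], L₂, .refl _, .refl _, .refl _, by simpa using h.symm, by simp⟩
  | cons δ M₁ ih =>
    obtain ⟨L₀, L', hsplit, hind, hrem⟩ := exists_of_swapEqv_cons (by simpa using h.symm)
    rcases List.append_eq_append_cons hsplit with ⟨y, rfl, rfl⟩ | ⟨x, rfl, rfl⟩
    · obtain ⟨p, q, r, s, h₁, h₂, h₃, h₄, hqr⟩ := ih (L₁ := L₀ ++ y) (by simpa using hrem)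
      exact ⟨δ :: p, q, r, s, (swapEqv_move_front hind y).trans (h₁.cons δ), h₂, h₃.cons δ,
        h₄, hqr⟩
    · have hL₁ : ∀ β ∈ L₁, Indep F δ β := fun β hβ => hind β (by simp [hβ])
      obtain ⟨p, q, r, s, h₁, h₂, h₃, h₄, hqr⟩ := ih (L₂ := x ++ L') (by simpa using hrem)
      refine ⟨p, q, δ :: r, s, h₁, ?_, ?_, h₄, ?_⟩
      · exact (swapEqv_move_front (fun β hβ => hind β (by simp [hβ])) L').trans (h₂.cons δ)
      · exact (h₃.cons δ).trans
          (swapEqv_move_front (fun β hβ => hL₁ β (h₁.symm.perm.subset (by simp [hβ]))) r).symm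
      · intro γ hγ β hβ
        rcases List.mem_cons.mp hβ with rfl | hβ
        · exact (hL₁ γ (h₁.symm.perm.subset (by simp [hγ]))).symm
        · exact hqr γ hγ β hβ

variable (F) in
def Cancellable (l : List (Letter k)) : Prop :=
  ∃ a b c γ, l = a ++ γ :: (b ++ γ.inv :: c) ∧ ∀ β ∈ b, Indep F γ β

variable (F) in
def Reduced (l : List (Letter k)) : Prop := ¬ Cancellable F l

variable (F) in
def CanLead (α : Letter k) (w : List (Letter k)) : Prop :=
  ∃ w₀ w₁, w = w₀ ++ α :: w₁ ∧ ∀ β ∈ w₀, Indep F α β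

lemma Cancellable.append_left {l : List (Letter k)} (h : Cancellable F l) (u : List (Letter k)) :
    Cancellable F (u ++ l) := by
  obtain ⟨a, b, c, γ, rfl, hb⟩ := h
  exact ⟨u ++ a, b, c, γ, by simp, hb⟩

lemma Cancellable.append_right {l : List (Letter k)} (h : Cancellable F l)
    (v : List (Letter k)) : Cancellable F (l ++ v) := by
  obtain ⟨a, b, c, γ, rfl, hb⟩ := h
  exact ⟨a, b, c ++ v, γ, by simp, hb⟩

lemma Reduced.nil : Reduced F ([] : List (Letter k)) := by
  rintro ⟨a, b, c, γ, h, -⟩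
  simpa using congrArg List.length h

lemma Reduced.singleton (α : Letter k) : Reduced F [α] := by
  rintro ⟨a, b, c, γ, h, -⟩
  have := congrArg List.length h
  simp only [List.length_cons, List.length_nil, zero_add, List.length_append] at this
  omega

lemma Reduced.of_append_left {u v : List (Letter k)} (h : Reduced F (u ++ v)) : Reduced F u :=
  fun hu => h (hu.append_right v)

lemma Reduced.of_append_right {u v : List (Letter k)} (h : Reduced F (u ++ v)) :
    Reduced F v :=
  fun hv => h (hv.append_left u)

lemma Reduced.of_cons {γ : Letter k} {l : List (Letter k)} (h : Reduced F (γ :: l)) :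
    Reduced F l :=
  Reduced.of_append_right (u := [γ]) h

lemma Reduced.not_canLead_inv {γ : Letter k} {l : List (Letter k)} (h : Reduced F (γ :: l)) :
    ¬ CanLead F γ.inv l := by
  rintro ⟨l₀, l₁, rfl, hl₀⟩
  exact h ⟨[], l₀, l₁, γ, rfl, by simpa using hl₀⟩

lemma wordProd_cancel {a b c : List (Letter k)} {γ : Letter k} (hb : ∀ β ∈ b, Indep F γ β) :
    wordProd k F (a ++ γ :: (b ++ γ.inv :: c)) = wordProd k F (a ++ (b ++ c)) := by
  rw [wordProd_append, (swapEqv_move_front hb _).symm.wordProd_eq]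
  simp [← mul_assoc]

lemma canLead_iff {α : Letter k} {w : List (Letter k)} :
    CanLead F α w ↔ ∃ u, SwapEqv F w (α :: u) := by
  constructor
  · rintro ⟨w₀, w₁, rfl, hw₀⟩
    exact ⟨w₀ ++ w₁, swapEqv_move_front hw₀ w₁⟩
  · rintro ⟨u, hu⟩
    obtain ⟨w₀, w₁, rfl, hw₀, -⟩ := exists_of_swapEqv_cons hu.symm
    exact ⟨w₀, w₁, rfl, hw₀⟩

lemma CanLead.of_swapEqv {α : Letter k} {w w' : List (Letter k)} (h : CanLead F α w)
    (hw : SwapEqv F w w') : CanLead F α w' := by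
  obtain ⟨u, hu⟩ := canLead_iff.mp h
  exact canLead_iff.mpr ⟨u, hw.symm.trans hu⟩

lemma CanLead.append_left {α : Letter k} {v : List (Letter k)} (h : CanLead F α v)
    {u : List (Letter k)} (hu : ∀ β ∈ u, Indep F α β) : CanLead F α (u ++ v) := by
  obtain ⟨v₀, v₁, rfl, hv₀⟩ := h
  refine ⟨u ++ v₀, v₁, by simp, fun β hβ => ?_⟩
  rcases List.mem_append.mp hβ with hβ | hβ
  exacts [hu β hβ, hv₀ β hβ]

lemma Cancellable.insert {u v : List (Letter k)} {ε : Letter k}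
    (h : Cancellable F (u ++ v)) (hu : ∀ β ∈ u, Indep F ε β) :
    Cancellable F (u ++ ε :: v) := by
  obtain ⟨a, b, c, γ, huv, hb⟩ := h
  rcases List.append_eq_append_cons huv with ⟨y, rfl, hy⟩ | ⟨x, rfl, rfl⟩
  · rcases List.append_eq_append_cons hy.symm with ⟨c', rfl, -⟩ | ⟨x, rfl, rfl⟩
    · exact (Cancellable.append_right ⟨a, b, c', γ, rfl, hb⟩ _)
    · refine ⟨a, y ++ ε :: x, c, γ, by simp, fun β hβ => ?_⟩
      simp only [List.mem_append, List.mem_cons] at hβ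
      rcases hβ with hβ | rfl | hβ
      · exact hb β (by simp [hβ])
      · exact (hu γ (by simp)).symm
      · exact hb β (by simp [hβ])
  · simpa using Cancellable.append_left ⟨x, b, c, γ, rfl, hb⟩ (u ++ [ε])

lemma Cancellable.of_insert {u v : List (Letter k)} {ε : Letter k}
    (h : Cancellable F (u ++ ε :: v)) :
    Cancellable F (u ++ v) ∨ CanLead F ε.inv v ∨ ε.inv ∈ u := by
  obtain ⟨a, b, c, γ, huv, hb⟩ := h
  rcases List.append_eq_append_cons huv.symm with ⟨y, rfl, rfl⟩ | ⟨x, hx, rfl⟩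
  · exact Or.inl (Cancellable.append_left ⟨y, b, c, γ, rfl, hb⟩ u)
  rcases x with _ | ⟨γ', x⟩
  · obtain ⟨rfl, rfl⟩ : γ = ε ∧ b ++ γ.inv :: c = v := by simpa using hx
    exact Or.inr (Or.inl ⟨b, c, rfl, hb⟩)
  obtain ⟨rfl, hbc⟩ : γ = γ' ∧ b ++ γ.inv :: c = x ++ ε :: v := by simpa using hx
  rcases List.append_eq_append_cons hbc with ⟨y, rfl, rfl⟩ | ⟨z, hz, rfl⟩
  · refine Or.inl ⟨a, x ++ y, c, γ, by simp, fun β hβ => hb β ?_⟩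
    simp only [List.mem_append, List.mem_cons] at hβ ⊢
    tauto
  rcases z with _ | ⟨γ'', z⟩
  · obtain ⟨rfl, rfl⟩ : γ.inv = ε ∧ c = v := by simpa using hz
    exact Or.inr (Or.inr (by simp))
  · obtain ⟨rfl, rfl⟩ : γ.inv = γ'' ∧ c = z ++ ε :: v := by simpa using hz
    exact Or.inl (Cancellable.append_right ⟨a, b, z, γ, by simp, hb⟩ _)

variable (F) in
open Classical in
/-- Left multiplication by a letter on reduced words, from which `wordAction` is built. -/
noncomputable def leftMul (δ : Letter k) : List (Letter k) → List (Letter k)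
  | [] => [δ]
  | β :: t => if β = δ.inv then t else if Indep F δ β then β :: leftMul δ t else δ :: β :: t

@[simp] lemma leftMul_nil (δ : Letter k) : leftMul F δ [] = [δ] := by
  rw [leftMul]

lemma leftMul_cons_inv (δ : Letter k) (t : List (Letter k)) :
    leftMul F δ (δ.inv :: t) = t := by
  rw [leftMul, if_pos rfl]

lemma leftMul_cons_of_indep {δ β : Letter k} (h : Indep F δ β) (t : List (Letter k)) :
    leftMul F δ (β :: t) = β :: leftMul F δ t := by
  rw [leftMul, if_neg h.ne_inv, if_pos h]

lemma leftMul_cons_of_not_indep {δ β : Letter k} (h₁ : β ≠ δ.inv) (h₂ : ¬ Indep F δ β)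
    (t : List (Letter k)) : leftMul F δ (β :: t) = δ :: β :: t := by
  rw [leftMul, if_neg h₁, if_neg h₂]

lemma leftMul_of_canLead {δ : Letter k} {w₀ : List (Letter k)} (h : ∀ β ∈ w₀, Indep F δ β)
    (w₁ : List (Letter k)) : leftMul F δ (w₀ ++ δ.inv :: w₁) = w₀ ++ w₁ := by
  induction w₀ with
  | nil => exact leftMul_cons_inv δ w₁
  | cons β t ih =>
    rw [List.cons_append, leftMul_cons_of_indep (h β (by simp)),
      ih fun γ hγ => h γ (by simp [hγ]), List.cons_append]

lemma leftMul_of_not_canLead {δ : Letter k} {w : List (Letter k)} (h : ¬ CanLead F δ.inv w) :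
    ∃ w₀ w₁, w = w₀ ++ w₁ ∧ (∀ β ∈ w₀, Indep F δ β) ∧ leftMul F δ w = w₀ ++ δ :: w₁ := by
  induction w with
  | nil => exact ⟨[], [], rfl, by simp, by simp⟩
  | cons β t ih =>
    have h₁ : β ≠ δ.inv := by
      rintro rfl
      exact h ⟨[], t, rfl, by simp⟩
    by_cases h₂ : Indep F δ β
    · obtain ⟨w₀, w₁, rfl, hw₀, hw⟩ := ih fun ht => h (ht.append_left (u := [β]) (by simpa))
      refine ⟨β :: w₀, w₁, rfl, ?_, by rw [leftMul_cons_of_indep h₂, hw]; rfl⟩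
      simpa [h₂] using hw₀
    · exact ⟨[], β :: t, rfl, by simp, leftMul_cons_of_not_indep h₁ h₂ t⟩

lemma swapEqv_leftMul_of_not_canLead {δ : Letter k} {w : List (Letter k)}
    (h : ¬ CanLead F δ.inv w) : SwapEqv F (leftMul F δ w) (δ :: w) := by
  obtain ⟨w₀, w₁, rfl, hw₀, hw⟩ := leftMul_of_not_canLead h
  rw [hw]
  exact swapEqv_move_front hw₀ w₁

lemma reduced_leftMul {w : List (Letter k)} (hw : Reduced F w) (δ : Letter k) :
    Reduced F (leftMul F δ w) := by
  by_cases hc : CanLead F δ.inv w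
  · obtain ⟨w₀, w₁, rfl, hw₀⟩ := hc
    rw [leftMul_of_canLead (δ := δ) hw₀]
    exact fun hc => hw (hc.insert hw₀)
  · obtain ⟨w₀, w₁, rfl, hw₀, hleft⟩ := leftMul_of_not_canLead hc
    rw [hleft]
    intro hcanc
    rcases hcanc.of_insert with hc' | hc' | hc'
    · exact hw hc'
    · exact hc (hc'.append_left hw₀)
    · exact Indep.irrefl δ (by simpa using hw₀ _ hc')

lemma SwapEqv.leftMul {w w' : List (Letter k)} (h : SwapEqv F w w') (δ : Letter k) :
    SwapEqv F (leftMul F δ w) (leftMul F δ w') := by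
  by_cases hc : CanLead F δ.inv w
  · obtain ⟨w₀, w₁, rfl, hw₀⟩ := hc
    obtain ⟨w₀', w₁', rfl, hw₀', hrem⟩ :=
      exists_of_swapEqv_cons ((swapEqv_move_front hw₀ w₁).symm.trans h)
    rw [leftMul_of_canLead (δ := δ) hw₀, leftMul_of_canLead (δ := δ) hw₀']
    exact hrem.symm
  · have hc' : ¬ CanLead F δ.inv w' := fun h' => hc (h'.of_swapEqv h.symm)
    exact (swapEqv_leftMul_of_not_canLead hc).trans
      ((h.cons δ).trans (swapEqv_leftMul_of_not_canLead hc').symm)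

lemma Reduced.swapEqv_leftMul {δ : Letter k} {t : List (Letter k)} (h : Reduced F (δ :: t)) :
    SwapEqv F (leftMul F δ t) (δ :: t) :=
  swapEqv_leftMul_of_not_canLead h.not_canLead_inv

lemma leftMul_comm {δ ε : Letter k} (h : Indep F δ ε) (w : List (Letter k)) :
    SwapEqv F (leftMul F δ (leftMul F ε w)) (leftMul F ε (leftMul F δ w)) := by
  induction w with
  | nil =>
    rw [leftMul_nil, leftMul_nil, leftMul_cons_of_indep h, leftMul_cons_of_indep h.symm,
      leftMul_nil, leftMul_nil]
    exact SwapEqv.swap [] [] h.symm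
  | cons β t ih =>
    by_cases h₁ : β = δ.inv
    · subst h₁
      rw [leftMul_cons_of_indep (δ := ε) (β := δ.inv) (by simpa using h.symm), leftMul_cons_inv,
        leftMul_cons_inv]
    by_cases h₂ : β = ε.inv
    · subst h₂
      rw [leftMul_cons_of_indep (δ := δ) (β := ε.inv) (by simpa using h), leftMul_cons_inv,
        leftMul_cons_inv]
    by_cases h₃ : Indep F δ β <;> by_cases h₄ : Indep F ε β
    · rw [leftMul_cons_of_indep h₄, leftMul_cons_of_indep h₃, leftMul_cons_of_indep h₃,
        leftMul_cons_of_indep h₄]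
      exact ih.cons β
    · rw [leftMul_cons_of_not_indep h₂ h₄, leftMul_cons_of_indep h₃, leftMul_cons_of_indep h,
        leftMul_cons_of_indep h₃, leftMul_cons_of_not_indep h₂ h₄]
    · rw [leftMul_cons_of_indep h₄, leftMul_cons_of_not_indep h₁ h₃,
        leftMul_cons_of_not_indep h₁ h₃, leftMul_cons_of_indep h.symm, leftMul_cons_of_indep h₄]
    · rw [leftMul_cons_of_not_indep h₂ h₄, leftMul_cons_of_not_indep h₁ h₃,
        leftMul_cons_of_indep h, leftMul_cons_of_indep h.symm, leftMul_cons_of_not_indep h₁ h₃,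
        leftMul_cons_of_not_indep h₂ h₄]
      exact SwapEqv.swap [] _ h.symm

lemma Reduced.leftMul_leftMul_inv {w : List (Letter k)} (hw : Reduced F w) (δ : Letter k) :
    SwapEqv F (leftMul F δ (leftMul F δ.inv w)) w := by
  induction w with
  | nil => rw [leftMul_nil, leftMul_cons_inv]
  | cons β t ih =>
    by_cases h₁ : β = δ
    · subst h₁
      rw [show leftMul F β.inv (β :: t) = t by simpa using leftMul_cons_inv (F := F) β.inv t]
      exact hw.swapEqv_leftMul
    have h₁' : β ≠ δ.inv.inv := by simpa using h₁
    by_cases h₂ : Indep F δ β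
    · rw [leftMul_cons_of_indep (by simpa using h₂), leftMul_cons_of_indep h₂]
      exact (ih hw.of_cons).cons β
    · rw [leftMul_cons_of_not_indep h₁' (by simpa using h₂), leftMul_cons_inv]

variable (k F) in
abbrev ReducedWord : Type := {l : List (Letter k) // Reduced F l}

variable (k F) in
instance ReducedWord.setoid : Setoid (ReducedWord k F) :=
  ⟨fun a b => SwapEqv F a.1 b.1, ⟨fun _ => .refl _, SwapEqv.symm, SwapEqv.trans⟩⟩

variable (k F) in
abbrev ReducedClass : Type := Quotient (ReducedWord.setoid k F)

namespace ReducedClass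

noncomputable def leftMul (δ : Letter k) : ReducedClass k F → ReducedClass k F :=
  Quotient.map (fun l => ⟨GraphGroupPaper.leftMul F δ l.1, reduced_leftMul l.2 δ⟩)
    (fun _ _ h => h.leftMul δ)

lemma leftMul_leftMul_inv (δ : Letter k) (t : ReducedClass k F) :
    leftMul δ (leftMul δ.inv t) = t := by
  induction t using Quotient.ind with
  | _ l => exact Quotient.sound (l.2.leftMul_leftMul_inv δ)

noncomputable def leftMulPerm (δ : Letter k) : Equiv.Perm (ReducedClass k F) where
  toFun := leftMul δ
  invFun := leftMul δ.inv
  left_inv t := by simpa using leftMul_leftMul_inv δ.inv t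
  right_inv := leftMul_leftMul_inv δ

lemma leftMulPerm_commute {δ ε : Letter k} (h : Indep F δ ε) :
    Commute (leftMulPerm (F := F) δ) (leftMulPerm ε) := by
  refine Equiv.ext fun t => ?_
  induction t using Quotient.ind with
  | _ l => exact Quotient.sound (leftMul_comm h l.1)

end ReducedClass

open ReducedClass in
noncomputable def wordAction : Grp k F →* Equiv.Perm (ReducedClass k F) :=
  PresentedGroup.toGroup (f := fun i => leftMulPerm (i, true)) <| by
    rintro r ⟨i, j, hij, hF, rfl⟩
    simp only [map_mul, map_inv, FreeGroup.lift_apply_of, mul_inv_eq_iff_eq_mul]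
    exact leftMulPerm_commute (F := F) (δ := (i, true)) (ε := (j, true)) ⟨hij, hF⟩

lemma wordAction_sym (α : Letter k) (t : ReducedClass k F) :
    wordAction (sym k F α) t = ReducedClass.leftMul α t := by
  obtain ⟨i, _ | _⟩ := α
  · simp only [sym, gen, Bool.false_eq_true, ↓reduceIte, map_inv, wordAction,
      PresentedGroup.toGroup.of]
    rfl
  · simp only [sym, gen, ↓reduceIte, wordAction, PresentedGroup.toGroup.of]
    rfl

lemma wordAction_wordProd {l : List (Letter k)} (hl : Reduced F l) :
    wordAction (wordProd k F l) ⟦⟨[], Reduced.nil⟩⟧ = (⟦⟨l, hl⟩⟧ : ReducedClass k F) := by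
  induction l with
  | nil => rfl
  | cons α t ih =>
    rw [wordProd_cons, map_mul, Equiv.Perm.mul_apply, ih hl.of_cons, wordAction_sym]
    exact Quotient.sound hl.swapEqv_leftMul

/-- Normal form theorem: evaluating `wordAction` at the empty word recovers a reduced word
from its product, up to swaps. -/
theorem swapEqv_of_wordProd_eq {l m : List (Letter k)} (hl : Reduced F l) (hm : Reduced F m)
    (h : wordProd k F l = wordProd k F m) : SwapEqv F l m := by
  have := wordAction_wordProd hl
  rw [h, wordAction_wordProd hm] at this
  exact Quotient.exact this.symm

lemma exists_wordProd_eq (g : Grp k F) : ∃ l, wordProd k F l = g := by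
  induction g using PresentedGroup.induction_on with
  | H z =>
    induction z using FreeGroup.induction_on with
    | C1 => exact ⟨[], rfl⟩
    | of i =>
      refine ⟨[(i, true)], ?_⟩
      simp only [wordProd_cons, sym, ↓reduceIte, gen, wordProd_nil, mul_one]
      rfl
    | inv_of _ ih =>
      obtain ⟨l, hl⟩ := ih
      exact ⟨wordInv l, by simp [hl]⟩
    | mul _ _ ihx ihy =>
      obtain ⟨l, hl⟩ := ihx
      obtain ⟨m, hm⟩ := ihy
      exact ⟨l ++ m, by simp [hl, hm]⟩

lemma len_le_length {g : Grp k F} {l : List (Letter k)} (h : wordProd k F l = g) :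
    len g ≤ l.length :=
  Nat.sInf_le ⟨l, h, rfl⟩

lemma exists_minWord (g : Grp k F) : ∃ l, MinWord g l := by
  obtain ⟨l, hl⟩ := exists_wordProd_eq g
  exact Nat.sInf_mem (s := {n | ∃ l, wordProd k F l = g ∧ l.length = n}) ⟨l.length, l, hl, rfl⟩

@[simp] lemma len_eq_zero {g : Grp k F} : len g = 0 ↔ g = 1 := by
  refine ⟨fun h => ?_, fun h => Nat.eq_zero_of_le_zero (len_le_length (l := []) (by simp [h]))⟩
  obtain ⟨l, hl, hlen⟩ := exists_minWord g
  rw [h, List.length_eq_zero_iff] at hlen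
  subst hlen
  exact hl.symm

@[simp] lemma len_one : len (1 : Grp k F) = 0 := len_eq_zero.mpr rfl

lemma len_inv_le (g : Grp k F) : len g⁻¹ ≤ len g := by
  obtain ⟨l, hl, hlen⟩ := exists_minWord g
  rw [← hlen, ← length_wordInv]
  exact len_le_length (by simp [hl])

@[simp] lemma len_inv (g : Grp k F) : len g⁻¹ = len g :=
  (len_inv_le g).antisymm (by simpa using len_inv_le g⁻¹)

lemma len_inv_mul_comm (a b : Grp k F) : len (a⁻¹ * b) = len (b⁻¹ * a) := by
  rw [← len_inv, mul_inv_rev, inv_inv]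

lemma len_mul_le (a b : Grp k F) : len (a * b) ≤ len a + len b := by
  obtain ⟨la, hla, hlena⟩ := exists_minWord a
  obtain ⟨lb, hlb, hlenb⟩ := exists_minWord b
  rw [← hlena, ← hlenb, ← List.length_append]
  exact len_le_length (by simp [hla, hlb])

lemma len_le_len_add_len_inv_mul (a g : Grp k F) : len g ≤ len a + len (a⁻¹ * g) := by
  simpa using len_mul_le a (a⁻¹ * g)

lemma MinWord.reduced {g : Grp k F} {l : List (Letter k)} (h : MinWord g l) : Reduced F l := by
  rintro ⟨a, b, c, γ, rfl, hb⟩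
  have := len_le_length (h.1.symm.trans (wordProd_cancel hb)).symm
  simp [← h.2] at this

lemma MinWord.of_swapEqv {g : Grp k F} {l l' : List (Letter k)} (h : MinWord g l)
    (hl : SwapEqv F l l') : MinWord g l' :=
  ⟨hl.wordProd_eq ▸ h.1, hl.perm.length_eq ▸ h.2⟩

lemma Reduced.minWord {l : List (Letter k)} (hl : Reduced F l) :
    MinWord (wordProd k F l) l := by
  obtain ⟨m, hm⟩ := exists_minWord (wordProd k F l)
  exact hm.of_swapEqv (swapEqv_of_wordProd_eq hm.reduced hl hm.1)

@[simp] lemma len_sym (δ : Letter k) : len (sym k F δ) = 1 := by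
  simpa using ((Reduced.singleton (F := F) δ).minWord).2.symm

lemma sym_ne_one (δ : Letter k) : sym k F δ ≠ 1 := by
  intro h
  simpa [h] using len_sym (F := F) δ

lemma le.refl (g : Grp k F) : le g g := by
  simp [le]

lemma one_le (g : Grp k F) : le 1 g := by
  simp [le]

lemma eq_one_of_le_one {g : Grp k F} (h : le g 1) : g = 1 := by
  rw [← len_eq_zero]
  simp only [le, len_one, mul_one, len_inv] at h
  omega

lemma le.antisymm {a b : Grp k F} (h₁ : le a b) (h₂ : le b a) : a = b := by
  unfold le at h₁ h₂
  have : len (a⁻¹ * b) = 0 := by omega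
  simpa [inv_mul_eq_one] using this

lemma le.trans {a b c : Grp k F} (h₁ : le a b) (h₂ : le b c) : le a c := by
  have h₃ : len (a⁻¹ * c) ≤ len (a⁻¹ * b) + len (b⁻¹ * c) := by
    simpa [mul_assoc] using len_mul_le (a⁻¹ * b) (b⁻¹ * c)
  have h₄ := len_le_len_add_len_inv_mul a c
  unfold le at *
  omega

lemma le.mul_le {a t g : Grp k F} (hag : le a g) (ht : le t (a⁻¹ * g)) : le (a * t) g := by
  have h₁ := len_mul_le a t
  have h₂ := len_le_len_add_len_inv_mul (a * t) g
  unfold le at *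
  rw [mul_inv_rev, mul_assoc] at h₂ ⊢
  omega

lemma le.le_mul {a t g : Grp k F} (hag : le a g) (ht : le t (a⁻¹ * g)) : le a (a * t) := by
  have h₁ := len_mul_le a t
  have h₂ := len_le_len_add_len_inv_mul (a * t) g
  unfold le at *
  rw [mul_inv_rev, mul_assoc] at h₂
  rw [inv_mul_cancel_left]
  omega

lemma le.inv_mul {d a g : Grp k F} (hda : le d a) (hag : le a g) : le (d⁻¹ * a) (d⁻¹ * g) := by
  have hdg := hda.trans hag
  unfold le at *
  rw [mul_inv_rev, inv_inv, mul_assoc, mul_inv_cancel_left]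
  omega

lemma le.inv_mul_le_inv {b g : Grp k F} (h : le b g) : le (g⁻¹ * b) g⁻¹ := by
  unfold le at *
  rw [mul_inv_rev, inv_inv, mul_assoc, mul_inv_cancel, mul_one, len_inv, len_inv,
    len_inv_mul_comm]
  omega

lemma MinWord.of_append_left {g : Grp k F} {A C : List (Letter k)} (h : MinWord g (A ++ C)) :
    MinWord (wordProd k F A) A :=
  h.reduced.of_append_left.minWord

lemma MinWord.of_append_right {g : Grp k F} {A C : List (Letter k)}
    (h : MinWord g (A ++ C)) : MinWord (wordProd k F C) C :=
  h.reduced.of_append_right.minWord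

lemma MinWord.le_of_append {g : Grp k F} {A C : List (Letter k)} (h : MinWord g (A ++ C)) :
    le (wordProd k F A) g := by
  have hC : wordProd k F C = (wordProd k F A)⁻¹ * g := by
    rw [← h.1, wordProd_append, inv_mul_cancel_left]
  have := h.2
  rw [List.length_append, h.of_append_left.2, h.of_append_right.2, hC] at this
  exact this.symm

lemma MinWord.append {a b : Grp k F} {A B : List (Letter k)} (hA : MinWord a A)
    (hB : MinWord b B) (h : len (a * b) = len a + len b) : MinWord (a * b) (A ++ B) :=
  ⟨by rw [wordProd_append, hA.1, hB.1], by rw [List.length_append, hA.2, hB.2, h]⟩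

lemma le.minWord_append {a g : Grp k F} {A C : List (Letter k)} (hag : le a g)
    (hA : MinWord a A) (hC : MinWord (a⁻¹ * g) C) : MinWord g (A ++ C) := by
  simpa using hA.append hC (by simpa [le] using hag)

lemma MinWord.wordInv {g : Grp k F} {l : List (Letter k)} (h : MinWord g l) :
    MinWord g⁻¹ (wordInv l) :=
  ⟨by rw [wordProd_wordInv, h.1], by rw [length_wordInv, len_inv, h.2]⟩

lemma exists_sym_le {a : Grp k F} (ha : a ≠ 1) : ∃ δ, le (sym k F δ) a := by
  obtain ⟨_ | ⟨δ, t⟩, hl⟩ := exists_minWord a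
  · exact absurd hl.1.symm ha
  · exact ⟨δ, by simpa using MinWord.le_of_append (A := [δ]) hl⟩

lemma sym_le_of_minWord {g : Grp k F} {δ : Letter k} {L₀ L₁ : List (Letter k)}
    (h : MinWord g (L₀ ++ δ :: L₁)) (hL₀ : ∀ β ∈ L₀, Indep F δ β) : le (sym k F δ) g := by
  simpa using MinWord.le_of_append (A := [δ]) (h.of_swapEqv (swapEqv_move_front hL₀ L₁))

lemma exists_of_sym_le {g : Grp k F} {δ : Letter k} (h : le (sym k F δ) g)
    {L : List (Letter k)} (hL : MinWord g L) :
    ∃ L₀ L₁, L = L₀ ++ δ :: L₁ ∧ ∀ β ∈ L₀, Indep F δ β := by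
  obtain ⟨C, hC⟩ := exists_minWord ((sym k F δ)⁻¹ * g)
  have hδC : MinWord g (δ :: C) := le.minWord_append (A := [δ]) h ⟨by simp, by simp⟩ hC
  obtain ⟨L₀, L₁, rfl, hL₀, -⟩ :=
    exists_of_swapEqv_cons (swapEqv_of_wordProd_eq hδC.reduced hL.reduced (hδC.1.trans hL.1.symm))
  exact ⟨L₀, L₁, rfl, hL₀⟩

lemma sym_le_or {a g : Grp k F} {δ : Letter k} (hag : le a g) (hδ : le (sym k F δ) g) :
    le (sym k F δ) a ∨ Commute (sym k F δ) a ∧ le (sym k F δ) (a⁻¹ * g) := by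
  obtain ⟨A, hA⟩ := exists_minWord a
  obtain ⟨C, hC⟩ := exists_minWord (a⁻¹ * g)
  have hAC := le.minWord_append hag hA hC
  obtain ⟨L₀, L₁, hL, hL₀⟩ := exists_of_sym_le hδ hAC
  rcases List.append_eq_append_cons hL with ⟨y, rfl, rfl⟩ | ⟨x, rfl, rfl⟩
  · exact Or.inl (sym_le_of_minWord hA fun β hβ => hL₀ β (by simp [hβ]))
  · refine Or.inr ⟨hA.1 ▸ commute_wordProd fun β hβ => hL₀ β (by simp [hβ]), ?_⟩
    exact sym_le_of_minWord hC fun β hβ => hL₀ β (by simp [hβ])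

lemma Cancellable.exists_of_append {A B : List (Letter k)} (h : Cancellable F (A ++ B))
    (hA : Reduced F A) (hB : Reduced F B) :
    ∃ γ a b₁ b₂ c, A = a ++ γ :: b₁ ∧ B = b₂ ++ γ.inv :: c ∧
      (∀ β ∈ b₁, Indep F γ β) ∧ ∀ β ∈ b₂, Indep F γ β := by
  obtain ⟨a, b, c, γ, hAB, hb⟩ := h
  rcases List.append_eq_append_cons hAB with ⟨y, rfl, hy⟩ | ⟨x, rfl, rfl⟩
  · rcases List.append_eq_append_cons hy.symm with ⟨c', rfl, -⟩ | ⟨b₂, rfl, rfl⟩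
    · exact absurd ⟨a, b, c', γ, rfl, hb⟩ hA
    · exact ⟨γ, a, y, b₂, c, rfl, rfl, fun β hβ => hb β (by simp [hβ]),
        fun β hβ => hb β (by simp [hβ])⟩
  · exact absurd ⟨x, b, c, γ, rfl, hb⟩ hB

lemma exists_sym_le_of_len_mul_lt {a b : Grp k F} (h : len (a * b) < len a + len b) :
    ∃ δ, le (sym k F δ) a⁻¹ ∧ le (sym k F δ) b := by
  obtain ⟨A, hA⟩ := exists_minWord a
  obtain ⟨B, hB⟩ := exists_minWord b
  have hAB : Cancellable F (A ++ B) := by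
    by_contra hred
    have := (Reduced.minWord hred).2
    simp only [List.length_append, hA.2, hB.2, wordProd_append, hA.1, hB.1] at this
    omega
  obtain ⟨γ, a', b₁, b₂, c, rfl, rfl, hb₁, hb₂⟩ := hAB.exists_of_append hA.reduced hB.reduced
  refine ⟨γ.inv, sym_le_of_minWord (L₀ := wordInv b₁) (L₁ := wordInv a') ?_ ?_,
    sym_le_of_minWord hB (by simpa using hb₂)⟩
  · simpa using hA.wordInv
  · intro β hβ
    simpa using hb₁ β.inv (mem_wordInv.mp hβ)

lemma len_mul_lt_of_sym_le {a b : Grp k F} {δ : Letter k} (ha : le (sym k F δ) a⁻¹)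
    (hb : le (sym k F δ) b) : len (a * b) < len a + len b := by
  have h := len_mul_le (a * sym k F δ) ((sym k F δ)⁻¹ * b)
  rw [mul_assoc, mul_inv_cancel_left, ← len_inv (a * sym k F δ), mul_inv_rev] at h
  unfold le at ha hb
  rw [len_sym, len_inv] at ha
  rw [len_sym] at hb
  omega

lemma le_iff_forall_sym {a g : Grp k F} :
    le a g ↔ ∀ δ, le (sym k F δ) a⁻¹ → ¬ le (sym k F δ) (a⁻¹ * g) := by
  constructor
  · intro hag δ ha hg
    have := len_mul_lt_of_sym_le ha hg
    rw [mul_inv_cancel_left] at this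
    unfold le at hag
    omega
  · intro h
    by_contra hag
    have hlt : len (a * (a⁻¹ * g)) < len a + len (a⁻¹ * g) := by
      rw [mul_inv_cancel_left]
      exact lt_of_le_of_ne (len_le_len_add_len_inv_mul a g) hag
    obtain ⟨δ, hδa, hδg⟩ := exists_sym_le_of_len_mul_lt hlt
    exact h δ hδa hδg

lemma IsMeet.symm {x y m : Grp k F} (h : IsMeet x y m) : IsMeet y x m :=
  ⟨h.2.1, h.1, fun w h₁ h₂ => h.2.2 w h₂ h₁⟩

lemma IsMeet.eq_one_of_le {a b t : Grp k F} (h : IsMeet a b 1) (ha : le t a) (hb : le t b) :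
    t = 1 :=
  eq_one_of_le_one (h.2.2 t ha hb)

lemma IsMeet.of_le {a b a' b' : Grp k F} (h : IsMeet a b 1) (ha : le a' a) (hb : le b' b) :
    IsMeet a' b' 1 := by
  refine ⟨one_le a', one_le b', fun t h₁ h₂ => ?_⟩
  rw [h.eq_one_of_le (h₁.trans ha) (h₂.trans hb)]
  exact le.refl 1

lemma IsMeet.len_inv_mul {a b : Grp k F} (h : IsMeet a b 1) :
    len (a⁻¹ * b) = len a + len b := by
  have : le a⁻¹ (a⁻¹ * b) := le_iff_forall_sym.mpr fun δ ha hb =>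
    sym_ne_one δ (h.eq_one_of_le (by simpa using ha) (by simpa using hb))
  simpa [le] using this

lemma IsMeet.isMeet_inv_mul {x y m : Grp k F} (hm : IsMeet x y m) :
    IsMeet (m⁻¹ * x) (m⁻¹ * y) 1 := by
  refine ⟨one_le _, one_le _, fun t h₁ h₂ => ?_⟩
  have : m * t = m := (hm.2.2 _ (hm.1.mul_le h₁) (hm.2.1.mul_le h₂)).antisymm (hm.1.le_mul h₁)
  rw [mul_eq_left.mp this]
  exact le.refl 1

lemma IsMeet.len_inv_mul_eq_add {x y m : Grp k F} (hm : IsMeet x y m) :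
    len (x⁻¹ * y) = len (m⁻¹ * x) + len (m⁻¹ * y) := by
  simpa [mul_assoc] using hm.isMeet_inv_mul.len_inv_mul

lemma IsMeet.inv_mul_le_inv_mul {x y m : Grp k F} (hm : IsMeet x y m) :
    le (y⁻¹ * m) (y⁻¹ * x) := by
  have := hm.len_inv_mul_eq_add
  unfold le
  rw [mul_inv_rev, inv_inv, mul_assoc, mul_inv_cancel_left, len_inv_mul_comm y x,
    len_inv_mul_comm y m]
  omega

lemma IsMeet.exists_inv_mul_eq_of_dist_add_dist {x y z m : Grp k F} (hm : IsMeet x z m)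
    (hy : dist x y + dist y z = dist x z) :
    ∃ Q R : Grp k F, m⁻¹ * y = Q⁻¹ * R ∧ le Q⁻¹ (m⁻¹ * x) ∧ le R (m⁻¹ * z) ∧
      le Q⁻¹ (Q⁻¹ * R) := by
  unfold dist at hy
  obtain ⟨A, hA⟩ := exists_minWord (x⁻¹ * m)
  obtain ⟨C, hC⟩ := exists_minWord (m⁻¹ * z)
  obtain ⟨U, hU⟩ := exists_minWord (x⁻¹ * y)
  obtain ⟨V, hV⟩ := exists_minWord (y⁻¹ * z)
  have hAC : MinWord (x⁻¹ * z) (A ++ C) := by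
    simpa [mul_assoc] using hA.append hC (by
      simp [mul_assoc, len_inv_mul_comm x m, hm.len_inv_mul_eq_add])
  have hUV : MinWord (x⁻¹ * z) (U ++ V) := by
    simpa [mul_assoc] using hU.append hV (by simp [mul_assoc, hy])
  obtain ⟨p, q, r, s, hpq, hrs, hpr, -, hqr⟩ :=
    (swapEqv_of_wordProd_eq hAC.reduced hUV.reduced (hAC.1.trans hUV.1.symm)).levi
  have hpq' := hA.of_swapEqv hpq
  have hrs' := hC.of_swapEqv hrs
  have hPQ : wordProd k F p * wordProd k F q = x⁻¹ * m := by simpa using hpq'.1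
  have hPR : wordProd k F p * wordProd k F r = x⁻¹ * y := by
    simpa using (hU.of_swapEqv hpr).1
  refine ⟨wordProd k F q, wordProd k F r, ?_, ?_, by simpa using hrs'.le_of_append, ?_⟩
  · rw [show m⁻¹ * y = (x⁻¹ * m)⁻¹ * (x⁻¹ * y) by group, ← hPQ, ← hPR]
    group
  · have h := hpq'.le_of_append.inv_mul_le_inv
    rwa [← hPQ, mul_inv_rev, inv_mul_cancel_right, ← mul_inv_rev, hPQ, mul_inv_rev, inv_inv]
      at h
  · refine le_iff_forall_sym.mpr fun δ hδq hδr => ?_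
    obtain ⟨q₀, q₁, hq, -⟩ := exists_of_sym_le (by simpa using hδq) hpq'.of_append_right
    obtain ⟨r₀, r₁, hr, -⟩ := exists_of_sym_le (by simpa using hδr) hrs'.of_append_left
    exact Indep.irrefl δ (hqr δ (by simp [hq]) δ (by simp [hr]))

theorem IsMeet.le_of_dist_add_dist {x y z m : Grp k F} (hm : IsMeet x z m)
    (hy : dist x y + dist y z = dist x z) : le m y := by
  obtain ⟨Q, R, hmy, hQx, hRz, hQR⟩ := hm.exists_inv_mul_eq_of_dist_add_dist hy
  refine le_iff_forall_sym.mpr fun δ hδm hδy => ?_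
  rcases sym_le_or hQR (hmy ▸ hδy) with hδQ | ⟨-, hδR⟩
  · exact le_iff_forall_sym.mp hm.1 δ hδm (hδQ.trans hQx)
  · exact le_iff_forall_sym.mp hm.2.1 δ hδm ((by simpa using hδR : le _ R).trans hRz)

lemma eq_of_isMeet_inv_one {b y : Grp k F} (hby : le b y) (h : IsMeet y⁻¹ (y⁻¹ * b) 1) :
    y = b :=
  inv_mul_eq_one.mp (h.eq_one_of_le hby.inv_mul_le_inv (le.refl _))

lemma le_inv_mul_of_not_sym_le {b g : Grp k F} {δ : Letter k} (hbg : le b g)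
    (hδg : le (sym k F δ) g) (hδb : ¬ le (sym k F δ) b) :
    le b ((sym k F δ)⁻¹ * g) ∧ le (((sym k F δ)⁻¹ * g)⁻¹ * b) (g⁻¹ * b) := by
  obtain ⟨hcomm, hδ⟩ := (sym_le_or hbg hδg).resolve_left hδb
  set s := sym k F δ
  have hsb : b⁻¹ * (s⁻¹ * g) = s⁻¹ * (b⁻¹ * g) := by
    rw [← mul_assoc, ← mul_assoc, hcomm.inv_inv.eq]
  refine ⟨?_, ?_⟩
  · have hs : len s = 1 := len_sym δ
    unfold le at *
    rw [hsb]
    omega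
  · have h := hδ.inv_mul_le_inv
    rwa [show (b⁻¹ * g)⁻¹ * s = (s⁻¹ * g)⁻¹ * b by
      rw [mul_inv_rev, inv_inv, mul_inv_rev, inv_inv, mul_assoc, mul_assoc, hcomm.eq],
      show (b⁻¹ * g)⁻¹ = g⁻¹ * b by group] at h

lemma le_of_isMeet_inv_mul_one {a b y w : Grp k F} (hay : le a y) (hby : le b y)
    (h : IsMeet (y⁻¹ * a) (y⁻¹ * b) 1) (haw : le a w) (hbw : le b w) : le y w := by
  obtain ⟨n, hn⟩ : ∃ n, len y = n := ⟨_, rfl⟩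
  induction n generalizing y a b w with
  | zero =>
    rw [len_eq_zero.mp hn]
    exact one_le w
  | succ n ih =>
    by_cases ha : a = 1
    · subst ha
      rw [eq_of_isMeet_inv_one hby (by simpa using h)]
      exact hbw
    by_cases hb : b = 1
    · subst hb
      rw [eq_of_isMeet_inv_one hay (by simpa using h.symm)]
      exact haw
    obtain ⟨δ, hδa⟩ := exists_sym_le ha
    set s := sym k F δ
    have hδy := hδa.trans hay
    have hδw := hδa.trans haw
    -- what remains of `b` once `s` is stripped: `s⁻¹ * b`, or `b` itself when `s` commutes past it
    obtain ⟨b', hb'y, hb'w, hb'⟩ : ∃ b', le b' (s⁻¹ * y) ∧ le b' (s⁻¹ * w) ∧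
        le ((s⁻¹ * y)⁻¹ * b') (y⁻¹ * b) := by
      by_cases hδb : le s b
      · refine ⟨s⁻¹ * b, hδb.inv_mul hby, hδb.inv_mul hbw, ?_⟩
        simpa [mul_assoc] using le.refl (y⁻¹ * b)
      · exact ⟨b, (le_inv_mul_of_not_sym_le hby hδy hδb).1,
          (le_inv_mul_of_not_sym_le hbw hδw hδb).1, (le_inv_mul_of_not_sym_le hby hδy hδb).2⟩
    have hn' : len (s⁻¹ * y) = n := by
      have hs : len s = 1 := len_sym δ
      unfold le at hδy
      omega
    have h' : IsMeet ((s⁻¹ * y)⁻¹ * (s⁻¹ * a)) ((s⁻¹ * y)⁻¹ * b') 1 :=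
      h.of_le (by simpa [mul_assoc] using le.refl (y⁻¹ * a)) hb'
    simpa using hδw.mul_le (ih (hδa.inv_mul hay) hb'y h' (hδa.inv_mul haw) hb'w hn')

lemma isJoin_of_isMeet_inv_mul_one {a b y : Grp k F} (hay : le a y) (hby : le b y)
    (h : IsMeet (y⁻¹ * a) (y⁻¹ * b) 1) : IsJoin a b y :=
  ⟨hay, hby, fun _ haw hbw => le_of_isMeet_inv_mul_one hay hby h haw hbw⟩

lemma isJoin_of_le {a b : Grp k F} (h : le a b) : IsJoin a b b :=
  ⟨h, le.refl b, fun _ _ hbw => hbw⟩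

end

theorem stmt3_general {k : ℕ} {F : Set (Sym2 (Fin k))} (x y z : Grp k F)
    (h : IsMeet (y⁻¹ * x) (y⁻¹ * z) 1)
    (mxz mxy myz : Grp k F)
    (h1 : IsMeet x z mxz) (h2 : IsMeet x y mxy) (h3 : IsMeet y z myz) :
    ∃ j, IsJoin mxz mxy j ∧ IsJoin j myz y := by
  have hy : dist x y + dist y z = dist x z := by
    simpa [dist, len_inv_mul_comm x y, mul_assoc] using h.len_inv_mul.symm
  have hxz_le_xy : le mxz mxy := h2.2.2 mxz h1.1 (h1.le_of_dist_add_dist hy)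
  refine ⟨mxy, isJoin_of_le hxz_le_xy, isJoin_of_isMeet_inv_mul_one h2.2.1 h3.1 ?_⟩
  exact h.of_le h2.inv_mul_le_inv_mul h3.symm.inv_mul_le_inv_mul

/-- if `y⁻¹x ∧ y⁻¹z = 1`, then the joins involved are finite and
`(x ∧ z) ∨ (x ∧ y) ∨ (y ∧ z) = y`. -/
theorem stmt3 {k : ℕ} (hk : 1 ≤ k) {F : Set (Sym2 (Fin k))} (x y z : Grp k F)
    (h : IsMeet (y⁻¹ * x) (y⁻¹ * z) 1)
    (mxz mxy myz : Grp k F)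
    (h1 : IsMeet x z mxz) (h2 : IsMeet x y mxy) (h3 : IsMeet y z myz) :
    ∃ j, IsJoin mxz mxy j ∧ IsJoin j myz y :=
  stmt3_general x y z h mxz mxy myz h1 h2 h3

end GraphGroupPaper
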